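/- If a finite digraph G has no one-way cycle, then for any reals 0 < α < β < 1, G is (α,β)-proportional: there exist finite sets A_v such that for distinct u, v: u → v iff α·|A_u| < |A_u ∩ A_v| < β·|A_u|. -/

import Mathlib

def HasOneWayCycle {V : Type*} (E : V → V → Prop) : Prop :=
  ∃ (n : ℕ) (v : ℕ → V), 1 ≤ n ∧ v n = v 0 ∧
    ∀ i < n, E (v i) (v (i + 1)) ∧ ¬ E (v (i + 1)) (v i)

/-!
Without one-way cycles, the one-way edges form an acyclic relation, so some rank `r` strictly
increases along them. Take sizes `N u = M + B * r u` with `α * B > 1` and `M` large, and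
`K u = ⌊α * N u⌋`. Aim for `|A u ∩ A v|` equal to `K v` on a one-way edge `u → v` (it exceeds
`α * N u` because `N v ≥ N u + B`), to `max (K u) (K v) + 1` on a two-way edge, and to at most
`K u` otherwise. Nested initial segments of lengths `K u` supply `min (K u) (K v)` common elements,
a private block for each pair supplies the rest, and padding fixes the sizes; `M` large leaves
room for all of this while keeping every target below `β * N u`.
-/

open Finset

theorem Relation.TransGen.exists_seq {V : Type*} {R : V → V → Prop} {a b : V}
    (h : Relation.TransGen R a b) :
    ∃ (n : ℕ) (f : ℕ → V), 1 ≤ n ∧ f 0 = a ∧ f n = b ∧ ∀ i < n, R (f i) (f (i + 1)) := by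
  induction h with
  | @single b hab => exact ⟨1, fun i ↦ if i = 0 then a else b, le_rfl, rfl, rfl, by simpa⟩
  | @tail b c _ hbc ih =>
    obtain ⟨n, f, hn, hf0, hfn, hR⟩ := ih
    refine ⟨n + 1, fun i ↦ if i ≤ n then f i else c, by omega, by simpa, by simp, fun i hi ↦ ?_⟩
    rcases Nat.lt_or_eq_of_le (Nat.lt_succ_iff.1 hi) with hi | rfl
    · simpa [hi.le, Nat.succ_le_of_lt hi] using hR i hi
    · simpa [hfn] using hbc

theorem not_transGen_self_of_not_hasOneWayCycle {V : Type*} {E : V → V → Prop}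
    (h : ¬HasOneWayCycle E) (x : V) : ¬Relation.TransGen (fun u v ↦ E u v ∧ ¬E v u) x x := by
  intro hx
  obtain ⟨n, f, hn, hf0, hfn, hR⟩ := hx.exists_seq
  exact h ⟨n, f, hn, hfn.trans hf0.symm, hR⟩

theorem exists_rank_lt_of_acyclic {V : Type*} [Finite V] {R : V → V → Prop}
    (h : ∀ x, ¬Relation.TransGen R x x) :
    ∃ r : V → ℕ, (∀ v, r v ≤ Nat.card V) ∧ ∀ u v, R u v → r u < r v := by
  refine ⟨fun v ↦ {u | Relation.TransGen R u v}.ncard, fun v ↦ ?_, fun u v huv ↦ ?_⟩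
  · exact Set.ncard_le_card _
  · refine Set.ncard_lt_ncard ⟨fun w hw ↦ hw.tail huv, fun hsub ↦ h u ?_⟩ (Set.toFinite _)
    exact hsub (Relation.TransGen.single huv)

namespace Finset

theorem disjSum_inter_disjSum {α β : Type*} [DecidableEq α] [DecidableEq β]
    (s₁ s₂ : Finset α) (t₁ t₂ : Finset β) :
    s₁.disjSum t₁ ∩ s₂.disjSum t₂ = (s₁ ∩ s₂).disjSum (t₁ ∩ t₂) := by
  ext (x | x) <;> simp

theorem sigma_inter_sigma {ι : Type*} {σ : ι → Type*} [DecidableEq ι] [∀ i, DecidableEq (σ i)]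
    (s₁ s₂ : Finset ι) (t₁ t₂ : ∀ i, Finset (σ i)) :
    s₁.sigma t₁ ∩ s₂.sigma t₂ = (s₁ ∩ s₂).sigma fun i ↦ t₁ i ∩ t₂ i := by
  ext ⟨i, x⟩
  simp only [mem_inter, mem_sigma, and_and_and_comm]

end Finset

section Realization

variable {V : Type*} [Fintype V] [DecidableEq V]

def blockSets (c p : V → ℕ) (y : Sym2 V → ℕ) (u : V) :
    Finset (ℕ ⊕ (Σ _ : Sym2 V, ℕ) ⊕ V × ℕ) :=
  (range (c u)).disjSum
    ((((⊤ : SimpleGraph V).incidenceFinset u).sigma fun e ↦ range (y e)).disjSum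
      ({u} ×ˢ range (p u)))

theorem card_blockSets (c p : V → ℕ) (y : Sym2 V → ℕ) (u : V) :
    #(blockSets c p y u) = c u + (∑ e ∈ (⊤ : SimpleGraph V).incidenceFinset u, y e + p u) := by
  simp [blockSets, card_disjSum, card_sigma]

theorem incidenceFinset_top_inter {u v : V} (huv : u ≠ v) :
    (⊤ : SimpleGraph V).incidenceFinset u ∩ (⊤ : SimpleGraph V).incidenceFinset v = {s(u, v)} := by
  rw [← coe_inj, coe_inter, SimpleGraph.coe_incidenceFinset, SimpleGraph.coe_incidenceFinset,
    coe_singleton, SimpleGraph.incidenceSet_inter_incidenceSet_of_adj]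
  exact (SimpleGraph.top_adj u v).2 huv

theorem card_blockSets_inter (c p : V → ℕ) (y : Sym2 V → ℕ) {u v : V} (huv : u ≠ v) :
    #(blockSets c p y u ∩ blockSets c p y v) = min (c u) (c v) + y s(u, v) := by
  have hpad : ({u} ×ˢ range (p u)) ∩ ({v} ×ˢ range (p v)) = ∅ := by
    rw [product_inter_product, singleton_inter_of_notMem (mem_singleton.not.2 huv), empty_product]
  rw [blockSets, blockSets, disjSum_inter_disjSum, disjSum_inter_disjSum, sigma_inter_sigma,
    incidenceFinset_top_inter huv, hpad, card_disjSum, card_disjSum, range_inter_range]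
  simp

theorem exists_finset_nat_card_inter (c n : V → ℕ) (y : Sym2 V → ℕ)
    (h : ∀ u, c u + ∑ e ∈ (⊤ : SimpleGraph V).incidenceFinset u, y e ≤ n u) :
    ∃ A : V → Finset ℕ, (∀ u, #(A u) = n u) ∧
      ∀ u v, u ≠ v → #(A u ∩ A v) = min (c u) (c v) + y s(u, v) := by
  obtain ⟨f, hf⟩ := Countable.exists_injective_nat (ℕ ⊕ (Σ _ : Sym2 V, ℕ) ⊕ V × ℕ)
  let p u := n u - (c u + ∑ e ∈ (⊤ : SimpleGraph V).incidenceFinset u, y e)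
  refine ⟨fun u ↦ (blockSets c p y u).map ⟨f, hf⟩, fun u ↦ ?_, fun u v huv ↦ ?_⟩
  · rw [card_map, card_blockSets]
    have := h u
    simp only [p]
    omega
  · rw [← map_inter, card_map, card_blockSets_inter c p y huv]

end Realization

section Proportional

variable {V : Type*} (E : V → V → Prop) [DecidableRel E]

def interSize (K : V → ℕ) (u v : V) : ℕ :=
  if E u v then (if E v u then max (K u) (K v) + 1 else K v)
  else (if E v u then K u else min (K u) (K v))

variable {E}

theorem interSize_comm (K : V → ℕ) (u v : V) : interSize E K u v = interSize E K v u := by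
  unfold interSize
  split_ifs <;> simp only [max_comm, min_comm]

theorem min_le_interSize (K : V → ℕ) (u v : V) : min (K u) (K v) ≤ interSize E K u v := by
  unfold interSize
  split_ifs <;> omega

theorem interSize_le_max_add_one (K : V → ℕ) (u v : V) :
    interSize E K u v ≤ max (K u) (K v) + 1 := by
  unfold interSize
  split_ifs <;> omega

variable (E) in
def extraSize (K : V → ℕ) : Sym2 V → ℕ :=
  Sym2.lift ⟨fun u v ↦ interSize E K u v - min (K u) (K v),
    fun u v ↦ by dsimp only; rw [interSize_comm, min_comm]⟩

theorem min_add_extraSize (K : V → ℕ) (u v : V) :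
    min (K u) (K v) + extraSize E K s(u, v) = interSize E K u v := by
  have := min_le_interSize (E := E) K u v
  simp only [extraSize, Sym2.lift_mk]
  omega

variable {α β L : ℝ} {N : V → ℕ}

theorem edge_iff_interSize (hα : 0 ≤ α) (hL : ∀ u v, α * N v ≤ α * N u + L)
    (hlarge : ∀ u, α * N u + L + 1 < β * N u)
    (hgap : ∀ u v, E u v → ¬E v u → α * N u + 1 ≤ α * N v) (u v : V) :
    E u v ↔ α * N u < interSize E (fun w ↦ ⌊α * N w⌋₊) u v ∧
      (interSize E (fun w ↦ ⌊α * N w⌋₊) u v : ℝ) < β * N u := by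
  have hle w : (⌊α * N w⌋₊ : ℝ) ≤ α * N w := Nat.floor_le (by positivity)
  have hlt w : α * N w < ⌊α * N w⌋₊ + 1 := Nat.lt_floor_add_one _
  have hmax : ((max ⌊α * N u⌋₊ ⌊α * N v⌋₊ : ℕ) : ℝ) + 1 < β * N u := by
    have : max (⌊α * N u⌋₊ : ℝ) ⌊α * N v⌋₊ ≤ α * N u + L :=
      max_le ((hle u).trans (by linarith [hL u u])) ((hle v).trans (hL u v))
    rw [Nat.cast_max]
    linarith [hlarge u]
  unfold interSize
  by_cases huv : E u v <;> by_cases hvu : E v u <;> simp only [huv, hvu, if_true, if_false,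
    true_iff, false_iff, not_and, not_lt]
  · push_cast at hmax ⊢
    exact ⟨by linarith [hlt u, le_max_left (⌊α * N u⌋₊ : ℝ) ⌊α * N v⌋₊], hmax⟩
  · push_cast at hmax
    exact ⟨by linarith [hlt v, hgap u v huv hvu],
      lt_of_le_of_lt (le_max_right _ _) (by linarith)⟩
  · exact fun h ↦ absurd (hle u) (not_le.2 h)
  · intro h
    exact absurd (le_trans (Nat.cast_le.2 (min_le_left _ _)) (hle u)) (not_le.2 h)

theorem extraSize_floor_le (hα : 0 ≤ α) (hL : ∀ u v, α * N v ≤ α * N u + L) (e : Sym2 V) :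
    (extraSize E (fun w ↦ ⌊α * N w⌋₊) e : ℝ) ≤ L + 2 := by
  induction e using Sym2.ind with
  | h u v =>
  wlog huv : ⌊α * N u⌋₊ ≤ ⌊α * N v⌋₊ generalizing u v
  · rw [Sym2.eq_swap]
    exact this v u (le_of_not_ge huv)
  have hext : extraSize E (fun w ↦ ⌊α * N w⌋₊) s(u, v) ≤ ⌊α * N v⌋₊ - ⌊α * N u⌋₊ + 1 := by
    have := interSize_le_max_add_one (E := E) (fun w ↦ ⌊α * N w⌋₊) u v
    simp only [extraSize, Sym2.lift_mk, max_eq_right huv, min_eq_left huv] at this ⊢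
    omega
  have hcast := (Nat.cast_le (α := ℝ)).2 hext
  push_cast [Nat.cast_sub huv] at hcast
  linarith [Nat.floor_le (mul_nonneg hα (N v).cast_nonneg), Nat.lt_floor_add_one (α * N u), hL u v]

theorem floor_add_sum_extraSize_le [Fintype V] [DecidableEq V] (hα : 0 ≤ α)
    (hL : ∀ u v, α * N v ≤ α * N u + L)
    (hroom : ∀ u, α * N u + Fintype.card V * (L + 2) ≤ N u) (u : V) :
    ⌊α * N u⌋₊ + ∑ e ∈ (⊤ : SimpleGraph V).incidenceFinset u,
      extraSize E (fun w ↦ ⌊α * N w⌋₊) e ≤ N u := by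
  have hL2 : 0 ≤ L + 2 := by linarith [hL u u]
  have hdeg : (#((⊤ : SimpleGraph V).incidenceFinset u) : ℝ) ≤ Fintype.card V := by
    rw [SimpleGraph.card_incidenceFinset_eq_degree]
    exact_mod_cast (SimpleGraph.degree_lt_card_verts (G := ⊤) u).le
  have hsum : ∑ e ∈ (⊤ : SimpleGraph V).incidenceFinset u,
      (extraSize E (fun w ↦ ⌊α * N w⌋₊) e : ℝ) ≤ Fintype.card V * (L + 2) :=
    (sum_le_card_nsmul _ _ _ fun e _ ↦ extraSize_floor_le hα hL e).trans
      (by rw [nsmul_eq_mul]; gcongr)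
  have hfloor : (⌊α * N u⌋₊ : ℝ) ≤ α * N u := Nat.floor_le (by positivity)
  have : ((⌊α * N u⌋₊ + ∑ e ∈ (⊤ : SimpleGraph V).incidenceFinset u,
      extraSize E (fun w ↦ ⌊α * N w⌋₊) e : ℕ) : ℝ) ≤ N u := by
    push_cast
    linarith [hroom u]
  exact_mod_cast this

end Proportional

theorem exists_proportional_of_sizes {V : Type*} [Fintype V] (E : V → V → Prop) {α β L : ℝ}
    {N : V → ℕ} (hα : 0 ≤ α) (hL : ∀ u v, α * N v ≤ α * N u + L)
    (hlarge : ∀ u, α * N u + L + 1 < β * N u)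
    (hroom : ∀ u, α * N u + Fintype.card V * (L + 2) ≤ N u)
    (hgap : ∀ u v, E u v → ¬E v u → α * N u + 1 ≤ α * N v) :
    ∃ A : V → Finset ℕ, ∀ u v : V, u ≠ v →
      (E u v ↔ α * #(A u) < (#(A u ∩ A v) : ℝ) ∧ (#(A u ∩ A v) : ℝ) < β * #(A u)) := by
  classical
  obtain ⟨A, hcard, hinter⟩ := exists_finset_nat_card_inter (fun w ↦ ⌊α * N w⌋₊) N
    (extraSize E fun w ↦ ⌊α * N w⌋₊) (floor_add_sum_extraSize_le hα hL hroom)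
  refine ⟨A, fun u v huv ↦ ?_⟩
  rw [hcard, hinter u v huv, min_add_extraSize (fun w ↦ ⌊α * N w⌋₊) u v]
  exact edge_iff_interSize hα hL hlarge hgap u v

theorem exists_sizes {V : Type*} {α β : ℝ} (hα : 0 < α) (hαβ : α < β) (hβ : β < 1) (n : ℕ)
    (r : V → ℕ) (hr : ∀ v, r v ≤ n) :
    ∃ (N : V → ℕ) (L : ℝ), (∀ u v, α * N v ≤ α * N u + L) ∧
      (∀ u, α * N u + L + 1 < β * N u) ∧ (∀ u, α * N u + n * (L + 2) ≤ N u) ∧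
      ∀ u v, r u < r v → α * N u + 1 ≤ α * N v := by
  obtain ⟨B, hB⟩ := exists_nat_gt α⁻¹
  have hαB : 1 < α * B := by rwa [inv_lt_iff_one_lt_mul₀ hα, mul_comm] at hB
  set L := α * B * n with hL
  obtain ⟨M, hM⟩ := exists_nat_gt ((L + 1) / (β - α) + n * (L + 2) / (1 - α))
  have hβα : 0 < β - α := by linarith
  have h1α : 0 < 1 - α := by linarith
  have hL0 : 0 ≤ L := by positivity
  have hM1 : L + 1 < (β - α) * M := by
    rw [← div_lt_iff₀' hβα]
    linarith [show 0 ≤ n * (L + 2) / (1 - α) by positivity]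
  have hM2 : n * (L + 2) ≤ (1 - α) * M := by
    rw [← div_le_iff₀' h1α]
    linarith [show 0 ≤ (L + 1) / (β - α) by positivity]
  have hrL u : α * B * r u ≤ L := by
    rw [hL]; gcongr; exact_mod_cast hr u
  have hrB u : 0 ≤ α * B * r u := by positivity
  refine ⟨fun u ↦ M + B * r u, L, fun u v ↦ ?_, fun u ↦ ?_, fun u ↦ ?_, fun u v huv ↦ ?_⟩ <;>
    push_cast
  · linarith [hrL v, hrB u]
  · nlinarith [hrB u]
  · nlinarith [hrB u]
  · have : (r u : ℝ) + 1 ≤ r v := by exact_mod_cast huv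
    nlinarith

theorem stmt_15_general {V : Type*} [Fintype V] (E : V → V → Prop)
    (hnc : ¬ HasOneWayCycle E)
    (α β : ℝ) (hα : 0 < α) (hαβ : α < β) (hβ : β < 1) :
    ∃ A : V → Finset ℕ, ∀ u v : V, u ≠ v →
      (E u v ↔
        (α * (A u).card < ((A u ∩ A v).card : ℝ) ∧
          ((A u ∩ A v).card : ℝ) < β * (A u).card)) := by
  obtain ⟨r, hr, hr_lt⟩ :=
    exists_rank_lt_of_acyclic (not_transGen_self_of_not_hasOneWayCycle hnc)
  rw [Nat.card_eq_fintype_card] at hr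
  obtain ⟨N, L, hL, hlarge, hroom, hgap⟩ := exists_sizes hα hαβ hβ _ r hr
  exact exists_proportional_of_sizes E hα.le hL hlarge hroom
    fun u v huv hvu ↦ hgap u v (hr_lt u v ⟨huv, hvu⟩)

/-- A finite digraph with no one-way cycle is (α,β)-proportional for all 0 < α < β < 1. -/
theorem stmt_15 {V : Type*} [Fintype V] (E : V → V → Prop)
    (hirr : Irreflexive E) (hnc : ¬ HasOneWayCycle E)
    (α β : ℝ) (hα : 0 < α) (hαβ : α < β) (hβ : β < 1) :
    ∃ A : V → Finset ℕ, ∀ u v : V, u ≠ v →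
      (E u v ↔
        (α * (A u).card < ((A u ∩ A v).card : ℝ) ∧
          ((A u ∩ A v).card : ℝ) < β * (A u).card)) :=
  stmt_15_general E hnc α β hα hαβ hβ
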